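/- The F-theory of the natural numbers (the set of F-sentences in the language of ordered rings true in ℕ) is decidable. -/

import Mathlib

/-- Terms of the language `{+, ·, 0, 1}` with variables indexed by `ℕ`. -/
inductive OTerm : Type
  | var : ℕ → OTerm
  | zero : OTerm
  | one : OTerm
  | add : OTerm → OTerm → OTerm
  | mul : OTerm → OTerm → OTerm
  deriving DecidableEq

/-- Evaluation of a term in any structure for the language `{+, ·, 0, 1}`. -/
def OTerm.eval {α : Type*} [Add α] [Mul α] [Zero α] [One α]
    (v : ℕ → α) : OTerm → α
  | .var i => v i
  | .zero => 0
  | .one => 1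
  | .add t s => t.eval v + s.eval v
  | .mul t s => t.eval v * s.eval v

/-- The class `F` of formulas: quantifier-free formulas of the language
`{+, ·, <, 0, 1}` closed under Boolean connectives and the quantifier `Q`
("for all sufficiently large"), which binds the variable of the given index. -/
inductive FFormula : Type
  | eq : OTerm → OTerm → FFormula
  | lt : OTerm → OTerm → FFormula
  | not : FFormula → FFormula
  | and : FFormula → FFormula → FFormula
  | or : FFormula → FFormula → FFormula
  | Q : ℕ → FFormula → FFormula
  deriving DecidableEq

/-- Satisfaction: `Q i φ` holds iff there is `z` such that `φ` holds whenever
the variable `i` is assigned any value `x > z`. -/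
def FFormula.Sat (α : Type*) [Add α] [Mul α] [Zero α] [One α] [LT α]
    (v : ℕ → α) : FFormula → Prop
  | .eq t s => t.eval v = s.eval v
  | .lt t s => t.eval v < s.eval v
  | .not φ => ¬ φ.Sat α v
  | .and φ ψ => φ.Sat α v ∧ ψ.Sat α v
  | .or φ ψ => φ.Sat α v ∨ ψ.Sat α v
  | .Q i φ => ∃ z : α, ∀ x : α, z < x → φ.Sat α (Function.update v i x)

/-- Free variables of a term. -/
def OTerm.freeVars : OTerm → Finset ℕ
  | .var i => {i}
  | .zero => ∅
  | .one => ∅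
  | .add t s => t.freeVars ∪ s.freeVars
  | .mul t s => t.freeVars ∪ s.freeVars

/-- Free variables of an `F`-formula; `Q i` binds the variable `i`. -/
def FFormula.freeVars : FFormula → Finset ℕ
  | .eq t s => t.freeVars ∪ s.freeVars
  | .lt t s => t.freeVars ∪ s.freeVars
  | .not φ => φ.freeVars
  | .and φ ψ => φ.freeVars ∪ ψ.freeVars
  | .or φ ψ => φ.freeVars ∪ ψ.freeVars
  | .Q i φ => φ.freeVars.erase i

/-- An `F`-sentence is an `F`-formula with no free variables. -/
def FFormula.IsSentence (φ : FFormula) : Prop := φ.freeVars = ∅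

/-- A Gödel numbering of terms. -/
def OTerm.code : OTerm → ℕ
  | .var i => Nat.pair 0 i
  | .zero => Nat.pair 1 0
  | .one => Nat.pair 2 0
  | .add t s => Nat.pair 3 (Nat.pair t.code s.code)
  | .mul t s => Nat.pair 4 (Nat.pair t.code s.code)

/-- A Gödel numbering of `F`-formulas. -/
def FFormula.code : FFormula → ℕ
  | .eq t s => Nat.pair 0 (Nat.pair t.code s.code)
  | .lt t s => Nat.pair 1 (Nat.pair t.code s.code)
  | .not φ => Nat.pair 2 φ.code
  | .and φ ψ => Nat.pair 3 (Nat.pair φ.code ψ.code)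
  | .or φ ψ => Nat.pair 4 (Nat.pair φ.code ψ.code)
  | .Q i φ => Nat.pair 5 (Nat.pair i φ.code)

/-!
Over `ℕ` a term is, in any one of its variables, a polynomial with nonnegative coefficients, so
the difference of two terms is an integer polynomial the absolute values of whose coefficients add
up to at most the sum of the two terms evaluated at `1`. Beyond that number the sign of the
difference is the sign of its leading coefficient. Hence a quantifier-free formula has constant
truth value once the variable `i` exceeds the sum of its terms evaluated at `i = 1`, and `Q i φ` is
equivalent to `φ` with that sum plus one substituted for `i`. Eliminating `Q` from the inside out
leaves a quantifier-free sentence, which is decided by evaluation; on Gödel numbers every step is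
primitive recursive.
-/

open Function Polynomial Finset

namespace Polynomial

theorem eval_pos_of_sum_abs_coeff_lt {D : ℤ[X]} {x : ℤ} (hD : 0 < D.leadingCoeff)
    (hx : ∑ k ∈ range (D.natDegree + 1), |D.coeff k| < x) : 0 < D.eval x := by
  set d := D.natDegree
  set S := ∑ k ∈ range d, |D.coeff k|
  have hS : 0 ≤ S := sum_nonneg fun k _ => abs_nonneg _
  have hlc : 1 ≤ D.coeff d := hD
  have hSx : S + D.coeff d < x := by
    rwa [sum_range_succ, abs_of_pos (a := D.coeff d) hD] at hx
  have hx0 : 0 < x := by omega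
  have hsplit :
      x * D.eval x = D.coeff d * x ^ (d + 1) + ∑ k ∈ range d, D.coeff k * x ^ (k + 1) := by
    rw [eval_eq_sum_range, mul_sum, sum_range_succ, add_comm]
    congr 1 <;> [ring; exact sum_congr rfl fun k _ => by ring]
  have hlow : -(S * x ^ d) ≤ ∑ k ∈ range d, D.coeff k * x ^ (k + 1) := by
    rw [sum_mul, ← sum_neg_distrib]
    refine sum_le_sum fun k hk => ?_
    have hkd : x ^ (k + 1) ≤ x ^ d := pow_le_pow_right₀ hx0 (mem_range.1 hk)
    nlinarith [neg_abs_le (D.coeff k), abs_nonneg (D.coeff k), pow_pos hx0 (k + 1)]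
  have hgap : 0 < x ^ d * (x - S) := mul_pos (pow_pos hx0 d) (by omega)
  have hlead : x ^ d * x ≤ D.coeff d * x ^ (d + 1) := by
    rw [← pow_succ]; exact le_mul_of_one_le_left (pow_pos hx0 _).le hlc
  have hpos : 0 < x * D.eval x := by linarith
  exact pos_of_mul_pos_right hpos hx0.le

theorem sign_eval_eq_sign_leadingCoeff {D : ℤ[X]} {x : ℤ}
    (hx : ∑ k ∈ range (D.natDegree + 1), |D.coeff k| < x) :
    SignType.sign (D.eval x) = SignType.sign D.leadingCoeff := by
  rcases lt_trichotomy D.leadingCoeff 0 with hD | hD | hD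
  · have hneg : 0 < (-D).eval x :=
      eval_pos_of_sum_abs_coeff_lt (by rwa [leadingCoeff_neg, neg_pos])
        (by simpa only [natDegree_neg, coeff_neg, abs_neg] using hx)
    rw [sign_neg hD, sign_neg (by simpa using hneg)]
  · simp [leadingCoeff_eq_zero.1 hD]
  · rw [sign_pos hD, sign_pos (eval_pos_of_sum_abs_coeff_lt hD hx)]

theorem sign_sub_eval_eq_of_eval_one_lt (P Q : ℕ[X]) {x y : ℕ}
    (hx : P.eval 1 + Q.eval 1 < x) (hy : P.eval 1 + Q.eval 1 < y) :
    SignType.sign (((P.eval x : ℕ) : ℤ) - Q.eval x) =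
      SignType.sign (((P.eval y : ℕ) : ℤ) - Q.eval y) := by
  set D := P.map (Nat.castRingHom ℤ) - Q.map (Nat.castRingHom ℤ)
  have hD (z : ℕ) : D.eval (z : ℤ) = ((P.eval z : ℕ) : ℤ) - Q.eval z := by
    simp [D, eval_natCast_map]
  set N := max P.natDegree Q.natDegree + 1
  have hDN : D.natDegree + 1 ≤ N :=
    Nat.succ_le_succ ((natDegree_sub_le _ _).trans
      (max_le_max natDegree_map_le natDegree_map_le))
  have heval_one (R : ℕ[X]) (hR : R.natDegree < N) :
      ((R.eval 1 : ℕ) : ℤ) = ∑ k ∈ range N, (R.coeff k : ℤ) := by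
    rw [eval_eq_sum_range' hR]; simp
  have hbound :
      ∑ k ∈ range (D.natDegree + 1), |D.coeff k| ≤ ((P.eval 1 + Q.eval 1 : ℕ) : ℤ) := by
    calc ∑ k ∈ range (D.natDegree + 1), |D.coeff k|
        ≤ ∑ k ∈ range N, |D.coeff k| :=
          sum_le_sum_of_subset_of_nonneg (range_subset_range.2 hDN) fun _ _ _ => abs_nonneg _
      _ ≤ ∑ k ∈ range N, ((P.coeff k : ℤ) + Q.coeff k) := sum_le_sum fun k _ => by
          simpa [D] using abs_sub (P.coeff k : ℤ) (Q.coeff k)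
      _ = ((P.eval 1 + Q.eval 1 : ℕ) : ℤ) := by
          rw [Nat.cast_add, sum_add_distrib, heval_one P (by omega), heval_one Q (by omega)]
  rw [← hD, ← hD, sign_eval_eq_sign_leadingCoeff (by omega),
    sign_eval_eq_sign_leadingCoeff (by omega)]

end Polynomial

namespace OTerm

theorem map_eval {R S : Type*} [Semiring R] [Semiring S] (f : R →+* S) (v : ℕ → R)
    (t : OTerm) : f (t.eval v) = t.eval (f ∘ v) := by
  induction t <;> simp [eval, *]

def subst (t : OTerm) (i : ℕ) (b : OTerm) : OTerm :=
  match t with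
  | .var j => if j = i then b else .var j
  | .zero => .zero
  | .one => .one
  | .add t s => .add (t.subst i b) (s.subst i b)
  | .mul t s => .mul (t.subst i b) (s.subst i b)

theorem eval_subst {α : Type*} [Add α] [Mul α] [Zero α] [One α] (t : OTerm) (i : ℕ) (b : OTerm)
    (v : ℕ → α) : (t.subst i b).eval v = t.eval (update v i (b.eval v)) := by
  induction t with
  | var j => by_cases h : j = i <;> simp [subst, eval, h]
  | _ => simp [subst, eval, *]

noncomputable def toPoly (i : ℕ) (v : ℕ → ℕ) (t : OTerm) : ℕ[X] :=
  t.eval (update (C ∘ v) i X)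

theorem eval_toPoly (i : ℕ) (v : ℕ → ℕ) (t : OTerm) (x : ℕ) :
    (t.toPoly i v).eval x = t.eval (update v i x) := by
  rw [toPoly, ← coe_evalRingHom, map_eval, comp_update]
  congr 2
  · ext j; simp
  · simp

theorem sign_sub_eval_update_eq (p q : OTerm) (i : ℕ) (v : ℕ → ℕ) {x y : ℕ}
    (hx : p.eval (update v i 1) + q.eval (update v i 1) < x)
    (hy : p.eval (update v i 1) + q.eval (update v i 1) < y) :
    SignType.sign (((p.eval (update v i x) : ℕ) : ℤ) - q.eval (update v i x)) =
      SignType.sign (((p.eval (update v i y) : ℕ) : ℤ) - q.eval (update v i y)) := by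
  simp only [← eval_toPoly] at hx hy ⊢
  exact sign_sub_eval_eq_of_eval_one_lt _ _ hx hy

end OTerm

namespace FFormula

def QFree : FFormula → Prop
  | .eq _ _ | .lt _ _ => True
  | .not φ => φ.QFree
  | .and φ ψ | .or φ ψ => φ.QFree ∧ ψ.QFree
  | .Q _ _ => False

/-- Does not enter `Q`, so only meaningful on quantifier-free formulas. -/
def subst (φ : FFormula) (i : ℕ) (b : OTerm) : FFormula :=
  match φ with
  | .eq t s => .eq (t.subst i b) (s.subst i b)
  | .lt t s => .lt (t.subst i b) (s.subst i b)
  | .not φ => .not (φ.subst i b)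
  | .and φ ψ => .and (φ.subst i b) (ψ.subst i b)
  | .or φ ψ => .or (φ.subst i b) (ψ.subst i b)
  | .Q j φ => .Q j φ

theorem QFree.subst {φ : FFormula} (hφ : φ.QFree) (i : ℕ) (b : OTerm) :
    (φ.subst i b).QFree := by
  induction φ with
  | eq | lt => trivial
  | not φ ih => exact ih hφ
  | and φ ψ ihφ ihψ | or φ ψ ihφ ihψ => exact ⟨ihφ hφ.1, ihψ hφ.2⟩
  | Q => exact hφ.elim

theorem sat_subst {α : Type*} [Add α] [Mul α] [Zero α] [One α] [LT α] {φ : FFormula}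
    (hφ : φ.QFree) (i : ℕ) (b : OTerm) (v : ℕ → α) :
    (φ.subst i b).Sat α v ↔ φ.Sat α (update v i (b.eval v)) := by
  induction φ with
  | eq | lt => simp [subst, Sat, OTerm.eval_subst]
  | not φ ih => simp [subst, Sat, ih hφ]
  | and φ ψ ihφ ihψ | or φ ψ ihφ ihψ => simp [subst, Sat, ihφ hφ.1, ihψ hφ.2]
  | Q => exact hφ.elim

def thresh : FFormula → OTerm
  | .eq t s | .lt t s => .add t s
  | .not φ => φ.thresh
  | .and φ ψ | .or φ ψ => .add φ.thresh ψ.thresh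
  | .Q _ _ => .zero

theorem sat_update_iff_of_thresh_lt {φ : FFormula} (hφ : φ.QFree) (i : ℕ) (v : ℕ → ℕ)
    {x y : ℕ}
    (hx : φ.thresh.eval (update v i 1) < x) (hy : φ.thresh.eval (update v i 1) < y) :
    φ.Sat ℕ (update v i x) ↔ φ.Sat ℕ (update v i y) := by
  induction φ with
  | eq p q =>
    have h := p.sign_sub_eval_update_eq q i v hx hy
    simp only [Sat]
    rw [← Nat.cast_inj (R := ℤ), ← sub_eq_zero, ← sign_eq_zero_iff, h, sign_eq_zero_iff,
      sub_eq_zero, Nat.cast_inj]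
  | lt p q =>
    have h := p.sign_sub_eval_update_eq q i v hx hy
    simp only [Sat]
    rw [← Nat.cast_lt (α := ℤ), ← sub_neg, ← sign_eq_neg_one_iff, h, sign_eq_neg_one_iff,
      sub_neg, Nat.cast_lt]
  | not φ ih => exact not_congr (ih hφ hx hy)
  | and φ ψ ihφ ihψ =>
    simp only [thresh, OTerm.eval] at hx hy
    exact and_congr (ihφ hφ.1 (by omega) (by omega)) (ihψ hφ.2 (by omega) (by omega))
  | or φ ψ ihφ ihψ =>
    simp only [thresh, OTerm.eval] at hx hy
    exact or_congr (ihφ hφ.1 (by omega) (by omega)) (ihψ hφ.2 (by omega) (by omega))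
  | Q => exact hφ.elim

def bound (φ : FFormula) (i : ℕ) : OTerm :=
  .add (φ.thresh.subst i .one) .one

theorem sat_Q_iff_sat_subst_bound {φ : FFormula} (hφ : φ.QFree) (i : ℕ) (v : ℕ → ℕ) :
    (Q i φ).Sat ℕ v ↔ (φ.subst i (φ.bound i)).Sat ℕ v := by
  set T := φ.thresh.eval (update v i 1)
  have hbound : (φ.bound i).eval v = T + 1 := by
    simp [bound, OTerm.eval, OTerm.eval_subst, T]
  rw [sat_subst hφ, hbound]
  constructor
  · rintro ⟨z, hz⟩
    exact (sat_update_iff_of_thresh_lt hφ i v (by omega) (by omega)).1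
      (hz (max z T + 1) (by omega))
  · exact fun h => ⟨T, fun x hx => (sat_update_iff_of_thresh_lt hφ i v (by omega) hx).1 h⟩

def elim : FFormula → FFormula
  | .eq t s => .eq t s
  | .lt t s => .lt t s
  | .not φ => .not φ.elim
  | .and φ ψ => .and φ.elim ψ.elim
  | .or φ ψ => .or φ.elim ψ.elim
  | .Q i φ => φ.elim.subst i (φ.elim.bound i)

theorem qFree_elim (φ : FFormula) : φ.elim.QFree := by
  induction φ with
  | eq | lt => trivial
  | not φ ih => exact ih
  | and φ ψ ihφ ihψ | or φ ψ ihφ ihψ => exact ⟨ihφ, ihψ⟩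
  | Q i φ ih => exact ih.subst _ _

theorem sat_elim (φ : FFormula) (v : ℕ → ℕ) : φ.elim.Sat ℕ v ↔ φ.Sat ℕ v := by
  induction φ generalizing v with
  | eq | lt => rfl
  | not φ ih => exact not_congr (ih v)
  | and φ ψ ihφ ihψ => exact and_congr (ihφ v) (ihψ v)
  | or φ ψ ihφ ihψ => exact or_congr (ihφ v) (ihψ v)
  | Q i φ ih =>
    rw [elim, ← sat_Q_iff_sat_subst_bound (qFree_elim φ)]
    exact exists_congr fun z => forall₂_congr fun x _ => ih _

end FFormula

theorem Nat.unpair_right_lt {n : ℕ} (h : n.unpair.1 ≠ 0) : n.unpair.2 < n := by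
  conv_rhs => rw [← Nat.pair_unpair n]
  exact (Nat.right_le_pair 0 _).trans_lt (Nat.pair_lt_pair_left _ (Nat.pos_of_ne_zero h))

section CodeRec

open Primrec

universe u

variable {α : Type u}

/-- Structural recursion on the Gödel numberings above, whose codes are `Nat.pair k m` with tag
`k`; for `k ≠ 0` the immediate subformulas and subterms have codes among `m`, `m.unpair.1`,
`m.unpair.2`. The value at `Nat.pair k m` is entry `k` of `g a m r r₁ r₂`, where `r`, `r₁`, `r₂`
are the values at those three codes (all `0` if `k = 0`). -/
def codeRec (g : α → ℕ → ℕ → ℕ → ℕ → List ℕ) (a : α) (n : ℕ) : ℕ :=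
  if n.unpair.1 = 0 then (g a n.unpair.2 0 0 0).getD 0 0
  else (g a n.unpair.2 (codeRec g a n.unpair.2) (codeRec g a n.unpair.2.unpair.1)
    (codeRec g a n.unpair.2.unpair.2)).getD n.unpair.1 0
termination_by n
decreasing_by
  all_goals
    first
    | exact Nat.unpair_right_lt ‹_›
    | exact (Nat.unpair_left_le _).trans_lt (Nat.unpair_right_lt ‹_›)
    | exact (Nat.unpair_right_le _).trans_lt (Nat.unpair_right_lt ‹_›)

variable {g : α → ℕ → ℕ → ℕ → ℕ → List ℕ} {a : α} {m : ℕ}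

theorem codeRec_pair_zero : codeRec g a (Nat.pair 0 m) = (g a m 0 0 0).getD 0 0 := by
  rw [codeRec]; simp

theorem codeRec_pair {k : ℕ} (hk : k ≠ 0) :
    codeRec g a (Nat.pair k m) = (g a m (codeRec g a m) (codeRec g a m.unpair.1)
      (codeRec g a m.unpair.2)).getD k 0 := by
  rw [codeRec]; simp [hk]

theorem codeRec_primrec [Primcodable α]
    (hg : ∀ {β : Type u} [Primcodable β] {a : β → α} {m r r₁ r₂ : β → ℕ}, Primrec a →
      Primrec m → Primrec r → Primrec r₁ → Primrec r₂ →
      Primrec fun b => g (a b) (m b) (r b) (r₁ b) (r₂ b)) :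
    Primrec₂ (codeRec g) := by
  have hlen : Primrec fun p : α × List ℕ => p.2.length.unpair :=
    unpair.comp (list_length.comp snd)
  have hk := fst.comp hlen
  have hm := snd.comp hlen
  have hget {j : α × List ℕ → ℕ} (hj : Primrec j) :
      Primrec fun p : α × List ℕ => p.2.getD (j p) 0 :=
    (list_getD 0).comp snd hj
  refine nat_strong_rec _ (g := fun a l => some (if l.length.unpair.1 = 0 then
    (g a l.length.unpair.2 0 0 0).getD 0 0 else
    (g a l.length.unpair.2 (l.getD l.length.unpair.2 0) (l.getD l.length.unpair.2.unpair.1 0)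
      (l.getD l.length.unpair.2.unpair.2 0)).getD l.length.unpair.1 0)) ?_ ?_
  · refine option_some.comp (Primrec.ite (PrimrecRel.comp Primrec.eq hk (const 0)) ?_ ?_)
    · exact (list_getD 0).comp (hg fst hm (const 0) (const 0) (const 0)) (const 0)
    · exact (list_getD 0).comp (hg fst hm (hget hm) (hget (fst.comp (unpair.comp hm)))
        (hget (snd.comp (unpair.comp hm)))) hk
  · intro a n
    have hcall {j : ℕ} (hj : j < n) :
        ((List.range n).map (codeRec g a)).getD j 0 = codeRec g a j := by
      simp [hj]
    rw [codeRec]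
    simp only [List.length_map, List.length_range]
    split_ifs with h
    · rfl
    · have hlt := Nat.unpair_right_lt h
      rw [hcall hlt, hcall ((Nat.unpair_left_le _).trans_lt hlt),
        hcall ((Nat.unpair_right_le _).trans_lt hlt)]

end CodeRec

open Nat (pair)
open Primrec
open Primrec₂ (natPair)

def evalZeroN : ℕ → ℕ :=
  codeRec (fun (_ : Unit) _ _ r₁ r₂ => [0, 0, 1, r₁ + r₂, r₁ * r₂]) ()

theorem evalZeroN_code (t : OTerm) : evalZeroN t.code = t.eval (fun _ => 0) := by
  induction t <;> simp_all [evalZeroN, OTerm.code, OTerm.eval, codeRec_pair, codeRec_pair_zero]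

theorem evalZeroN_primrec : Primrec evalZeroN :=
  (codeRec_primrec fun _ _ _ hr₁ hr₂ =>
    list_cons.comp (const 0) <| list_cons.comp (const 0) <| list_cons.comp (const 1) <|
      list_cons.comp (nat_add.comp hr₁ hr₂) <| list_cons.comp (nat_mul.comp hr₁ hr₂) (const [])
  ).comp (const ()) Primrec.id

def substN : ℕ × ℕ → ℕ → ℕ :=
  codeRec fun ib m _ r₁ r₂ =>
    [if m = ib.1 then ib.2 else pair 0 m, pair 1 m, pair 2 m, pair 3 (pair r₁ r₂),
      pair 4 (pair r₁ r₂)]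

theorem substN_code (t : OTerm) (i : ℕ) (b : OTerm) :
    substN (i, b.code) t.code = (t.subst i b).code := by
  induction t with
  | var j => by_cases h : j = i <;> simp [substN, OTerm.code, OTerm.subst, codeRec_pair_zero, h]
  | _ => simp_all [substN, OTerm.code, OTerm.subst, codeRec_pair]

theorem substN_primrec : Primrec₂ substN :=
  codeRec_primrec fun hib hm _ hr₁ hr₂ =>
    list_cons.comp (Primrec.ite (PrimrecRel.comp Primrec.eq hm (fst.comp hib)) (snd.comp hib)
      (natPair.comp (const 0) hm)) <|
    list_cons.comp (natPair.comp (const 1) hm) <|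
    list_cons.comp (natPair.comp (const 2) hm) <|
    list_cons.comp (natPair.comp (const 3) (natPair.comp hr₁ hr₂)) <|
    list_cons.comp (natPair.comp (const 4) (natPair.comp hr₁ hr₂)) (const [])

def fsubstN : ℕ × ℕ → ℕ → ℕ :=
  codeRec fun ib m r r₁ r₂ =>
    [pair 0 (pair (substN ib m.unpair.1) (substN ib m.unpair.2)),
      pair 1 (pair (substN ib m.unpair.1) (substN ib m.unpair.2)),
      pair 2 r, pair 3 (pair r₁ r₂), pair 4 (pair r₁ r₂), pair 5 m]

theorem fsubstN_code (φ : FFormula) (i : ℕ) (b : OTerm) :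
    fsubstN (i, b.code) φ.code = (φ.subst i b).code := by
  induction φ <;> simp_all [fsubstN, FFormula.code, FFormula.subst, codeRec_pair,
    codeRec_pair_zero, substN_code]

theorem fsubstN_primrec : Primrec₂ fsubstN :=
  codeRec_primrec fun hib hm hr hr₁ hr₂ =>
    have hsub := natPair.comp (substN_primrec.comp hib (fst.comp (unpair.comp hm)))
      (substN_primrec.comp hib (snd.comp (unpair.comp hm)))
    list_cons.comp (natPair.comp (const 0) hsub) <|
    list_cons.comp (natPair.comp (const 1) hsub) <|
    list_cons.comp (natPair.comp (const 2) hr) <|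
    list_cons.comp (natPair.comp (const 3) (natPair.comp hr₁ hr₂)) <|
    list_cons.comp (natPair.comp (const 4) (natPair.comp hr₁ hr₂)) <|
    list_cons.comp (natPair.comp (const 5) hm) (const [])

def threshN : ℕ → ℕ :=
  codeRec (fun (_ : Unit) m r r₁ r₂ =>
    [pair 3 m, pair 3 m, r, pair 3 (pair r₁ r₂), pair 3 (pair r₁ r₂), OTerm.zero.code]) ()

theorem threshN_code (φ : FFormula) : threshN φ.code = φ.thresh.code := by
  induction φ <;> simp_all [threshN, FFormula.code, FFormula.thresh, OTerm.code, codeRec_pair,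
    codeRec_pair_zero]

theorem threshN_primrec : Primrec threshN :=
  (codeRec_primrec fun _ hm hr hr₁ hr₂ =>
    list_cons.comp (natPair.comp (const 3) hm) <|
    list_cons.comp (natPair.comp (const 3) hm) <|
    list_cons.comp hr <|
    list_cons.comp (natPair.comp (const 3) (natPair.comp hr₁ hr₂)) <|
    list_cons.comp (natPair.comp (const 3) (natPair.comp hr₁ hr₂)) <|
    list_cons.comp (const _) (const [])
  ).comp (const ()) Primrec.id

def boundN (c i : ℕ) : ℕ :=
  pair 3 (pair (substN (i, OTerm.one.code) (threshN c)) OTerm.one.code)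

theorem boundN_code (φ : FFormula) (i : ℕ) : boundN φ.code i = (φ.bound i).code := by
  rw [boundN, threshN_code, substN_code]; rfl

theorem boundN_primrec : Primrec₂ boundN :=
  natPair.comp (const 3) (natPair.comp
    (substN_primrec.comp (Primrec.pair snd (const _)) (threshN_primrec.comp fst)) (const _))

def elimN : ℕ → ℕ :=
  codeRec (fun (_ : Unit) m r r₁ r₂ =>
    [pair 0 m, pair 1 m, pair 2 r, pair 3 (pair r₁ r₂), pair 4 (pair r₁ r₂),
      fsubstN (m.unpair.1, boundN r₂ m.unpair.1) r₂]) ()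

theorem elimN_code (φ : FFormula) : elimN φ.code = φ.elim.code := by
  induction φ <;> simp_all [elimN, FFormula.code, FFormula.elim, codeRec_pair, codeRec_pair_zero,
    boundN_code, fsubstN_code]

theorem elimN_primrec : Primrec elimN :=
  (codeRec_primrec fun _ hm hr hr₁ hr₂ =>
    have hi := fst.comp (unpair.comp hm)
    list_cons.comp (natPair.comp (const 0) hm) <|
    list_cons.comp (natPair.comp (const 1) hm) <|
    list_cons.comp (natPair.comp (const 2) hr) <|
    list_cons.comp (natPair.comp (const 3) (natPair.comp hr₁ hr₂)) <|
    list_cons.comp (natPair.comp (const 4) (natPair.comp hr₁ hr₂)) <|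
    list_cons.comp (fsubstN_primrec.comp (Primrec.pair hi (boundN_primrec.comp hr₂ hi)) hr₂)
      (const [])
  ).comp (const ()) Primrec.id

def truthN : ℕ → ℕ :=
  codeRec (fun (_ : Unit) m r r₁ r₂ =>
    [if evalZeroN m.unpair.1 = evalZeroN m.unpair.2 then 1 else 0,
      if evalZeroN m.unpair.1 < evalZeroN m.unpair.2 then 1 else 0,
      1 - r, min r₁ r₂, max r₁ r₂]) ()

open Classical in
theorem truthN_code {φ : FFormula} (hφ : φ.QFree) :
    truthN φ.code = if φ.Sat ℕ (fun _ => 0) then 1 else 0 := by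
  induction φ with
  | eq | lt =>
    split_ifs with h <;> simp_all [truthN, FFormula.code, FFormula.Sat, codeRec_pair_zero,
      codeRec_pair, evalZeroN_code]
  | not φ ih =>
    simp only [truthN] at ih ⊢
    rw [FFormula.code, codeRec_pair two_ne_zero, ih hφ]
    by_cases h : φ.Sat ℕ (fun _ => 0) <;> simp [FFormula.Sat, h]
  | and φ ψ ihφ ihψ | or φ ψ ihφ ihψ =>
    simp only [truthN] at ihφ ihψ ⊢
    rw [FFormula.code, codeRec_pair (by norm_num), Nat.unpair_pair, ihφ hφ.1, ihψ hφ.2]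
    by_cases h : φ.Sat ℕ (fun _ => 0) <;> by_cases h' : ψ.Sat ℕ (fun _ => 0) <;>
      simp [FFormula.Sat, h, h']
  | Q => exact hφ.elim

theorem truthN_primrec : Primrec truthN :=
  (codeRec_primrec fun _ hm hr hr₁ hr₂ =>
    have ht := evalZeroN_primrec.comp (fst.comp (unpair.comp hm))
    have hs := evalZeroN_primrec.comp (snd.comp (unpair.comp hm))
    list_cons.comp (Primrec.ite (PrimrecRel.comp Primrec.eq ht hs) (const 1) (const 0)) <|
    list_cons.comp (Primrec.ite (PrimrecRel.comp nat_lt ht hs) (const 1) (const 0)) <|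
    list_cons.comp (nat_sub.comp (const 1) hr) <|
    list_cons.comp (nat_min.comp hr₁ hr₂) <|
    list_cons.comp (nat_max.comp hr₁ hr₂) (const [])
  ).comp (const ()) Primrec.id

/-- The `F`-theory of `ℕ` is decidable: there is a computable function on
Gödel numbers deciding whether an `F`-sentence is true in `ℕ`. -/
theorem F_theory_of_nat_decidable :
    ∃ f : ℕ → Bool, Computable f ∧
      ∀ φ : FFormula, φ.IsSentence →
        (f φ.code = true ↔ φ.Sat ℕ (fun _ => 0)) := by
  refine ⟨fun n => decide (truthN (elimN n) = 1), ?_, fun φ _ => ?_⟩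
  · exact (PrimrecRel.comp Primrec.eq (truthN_primrec.comp elimN_primrec) (const 1)).decide
      |>.to_comp
  · rw [decide_eq_true_iff, elimN_code, truthN_code φ.qFree_elim, φ.sat_elim]
    split_ifs with h <;> simp [h]
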